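/- Let Ū = (ū, v̄, w̄) ∈ ℝ³ with |2v̄+s| < 4, and define Ŝ₂[s,Ū] := (ū,w̄) + E(v̄,s)·(ū,w̄) where E(v̄,s) = (4s/((2v̄+s)²-16))·[[s+4-2v̄, 4],[(s+4)(s-2)+4v̄, 3s-4+2v̄]]. Then the state U' with first and third components Ŝ₂[s,Ū] and second component v̄+s satisfies the Rankine–Hugoniot conditions γ(U' - Ū) = F₀(U') - F₀(Ū) with shock speed γ = 2v̄+s, where F₀(u,v,w) = (4((v-1)u - w), v², 4(v(v-2)u - (v-1)w)). -/

import Mathlib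

/-!
For fixed `v`, the map `(u, w) ↦ γ • (u, w) - (F₀(u, v, w)₁, F₀(u, v, w)₃)` is linear, with matrix
`A v := fluxShiftMatrix γ v`, and `det (A v) = γ² - 16` does not depend on `v`. The middle
Rankine–Hugoniot equation holds for `γ = 2v̄ + s`, and then the outer two say `A (v̄ + s) y = A v̄ x`.
So `E(v̄, s)` is just `A (v̄ + s)⁻¹ (A v̄ - A (v̄ + s))`, which makes sense exactly when `γ² ≠ 16`.
-/

/-- The Baiti–Jenssen flux at `η = 0`. -/
noncomputable def F0 : ℝ × ℝ × ℝ → ℝ × ℝ × ℝ := fun p =>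
  (4 * ((p.2.1 - 1) * p.1 - p.2.2), p.2.1 ^ 2,
    4 * (p.2.1 * (p.2.1 - 2) * p.1 - (p.2.1 - 1) * p.2.2))

noncomputable def Emat (v s : ℝ) : Matrix (Fin 2) (Fin 2) ℝ :=
  (4 * s / ((2 * v + s) ^ 2 - 16)) •
    !![s + 4 - 2 * v, 4; (s + 4) * (s - 2) + 4 * v, 3 * s - 4 + 2 * v]

open Matrix

def fluxShiftMatrix (γ v : ℝ) : Matrix (Fin 2) (Fin 2) ℝ :=
  !![γ - 4 * (v - 1), 4; -4 * v * (v - 2), γ + 4 * (v - 1)]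

theorem rankineHugoniot_of_fluxShiftMatrix {γ v v' : ℝ} {x y : Fin 2 → ℝ}
    (hv : γ * (v' - v) = v' ^ 2 - v ^ 2)
    (huw : fluxShiftMatrix γ v' *ᵥ y = fluxShiftMatrix γ v *ᵥ x) :
    γ • ((y 0, v', y 1) - (x 0, v, x 1)) = F0 (y 0, v', y 1) - F0 (x 0, v, x 1) := by
  have hu := congrFun huw 0
  have hw := congrFun huw 1
  simp only [fluxShiftMatrix, mulVec, dotProduct, Fin.sum_univ_two, of_apply,
    cons_val', cons_val_zero, cons_val_one, empty_val',
    cons_val_fin_one] at hu hw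
  simp only [F0, Prod.smul_mk, Prod.mk_sub_mk, smul_eq_mul, Prod.mk.injEq]
  refine ⟨?_, hv, ?_⟩ <;> linarith

theorem fluxShiftMatrix_mul_Emat {v s : ℝ} (h : (2 * v + s) ^ 2 - 16 ≠ 0) :
    fluxShiftMatrix (2 * v + s) (v + s) * Emat v s =
      fluxShiftMatrix (2 * v + s) v - fluxShiftMatrix (2 * v + s) (v + s) := by
  rw [Emat, Matrix.mul_smul]
  simp only [fluxShiftMatrix]
  rw [mul_fin_two, smul_of]
  ext i j
  fin_cases i <;> fin_cases j <;> simp [-mul_eq_zero] <;> field_simp <;> ring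

theorem stmt4 (u v w s : ℝ) (h : |2 * v + s| < 4) :
    let x : Fin 2 → ℝ := ![u, w]
    let y : Fin 2 → ℝ := x + (Emat v s).mulVec x
    let U : ℝ × ℝ × ℝ := (u, v, w)
    let U' : ℝ × ℝ × ℝ := (y 0, v + s, y 1)
    (2 * v + s) • (U' - U) = F0 U' - F0 U := by
  intro x y U U'
  have hdet : (2 * v + s) ^ 2 - 16 ≠ 0 := by
    have := sq_lt_sq' (abs_lt.mp h).1 (abs_lt.mp h).2
    linarith
  refine rankineHugoniot_of_fluxShiftMatrix (x := x) (by ring) ?_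
  calc fluxShiftMatrix (2 * v + s) (v + s) *ᵥ y
      = (fluxShiftMatrix (2 * v + s) (v + s) +
          fluxShiftMatrix (2 * v + s) (v + s) * Emat v s) *ᵥ x := by
        rw [add_mulVec, ← mulVec_mulVec, ← mulVec_add]
    _ = fluxShiftMatrix (2 * v + s) v *ᵥ x := by
        rw [fluxShiftMatrix_mul_Emat hdet, add_sub_cancel]
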